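/- arXiv:1102.2270 — 2 statements merged into one kernel-verified Lean document; each statement's English description precedes it below -/
import Mathlib

section
/- Let A ⊆ B ⊆ X be topological spaces. Suppose there exists a set V_A ⊆ B, open in B, which deformation retracts onto A, and an open set V_B ⊆ X which deformation retracts onto B. Then there exists an open set U ⊆ X which deformation retracts onto A. -/
open unitInterval

/-- `V` deformation retracts onto `A` (within the ambient space `Y`): there is a homotopy
`H : V × [0,1] → Y` starting at the inclusion, ending in `A`, and fixing `A` pointwise
throughout. -/
def DefRetractOnto {Y : Type*} [TopologicalSpace Y] (V A : Set Y) : Prop :=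
  A ⊆ V ∧ ∃ H : C(V × unitInterval, Y),
    (∀ v : V, H (v, 0) = (v : Y)) ∧
    (∀ v : V, H (v, 1) ∈ A) ∧
    (∀ a : V, (a : Y) ∈ A → ∀ t : unitInterval, H (a, t) = (a : Y))

/-- Let `A ⊆ B ⊆ X`.  If some `V_A ⊆ B`, open in `B`, deformation retracts onto `A`, and some
open `V_B ⊆ X` deformation retracts onto `B`, then some open `U ⊆ X` deformation retracts
onto `A`. -/
theorem exists_open_defRetract {X : Type*} [TopologicalSpace X] (A B VA VB : Set X)
    (hAB : A ⊆ B) (hVAB : VA ⊆ B)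
    (hVAopen : ∃ O : Set X, IsOpen O ∧ VA = O ∩ B)
    (hVA : DefRetractOnto VA A)
    (hVBopen : IsOpen VB) (hVB : DefRetractOnto VB B) :
    ∃ U : Set X, IsOpen U ∧ DefRetractOnto U A := by
  obtain ⟨hAVA, HA, hA0, hA1, hAfix⟩ := hVA
  obtain ⟨hBVB, HB, hB0, hB1, hBfix⟩ := hVB
  obtain ⟨O, hO, hVAO⟩ := hVAopen
  -- the preimage, inside VB, of O under the retraction v ↦ HB (v, 1)
  set U : Set X := Subtype.val '' ((fun v : VB => HB (v, 1)) ⁻¹' O) with hUdef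
  have hrcont : Continuous fun v : VB => HB (v, 1) :=
    HB.continuous.comp (continuous_id.prodMk continuous_const)
  have hUopen : IsOpen U := hVBopen.isOpenMap_subtype_val _ (hO.preimage hrcont)
  have hUVB : U ⊆ VB := by rintro x ⟨v, _, rfl⟩; exact v.2
  -- inclusion U → VB
  let j : U → VB := fun u => ⟨u.1, hUVB u.2⟩
  have hjcont : Continuous j := continuous_subtype_val.subtype_mk _
  have hmemO : ∀ u : U, HB (j u, 1) ∈ O := by
    rintro ⟨x, v, hv, rfl⟩
    have : j ⟨v.1, ⟨v, hv, rfl⟩⟩ = v := Subtype.ext rfl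
    rwa [this]
  have hmemVA : ∀ u : U, HB (j u, 1) ∈ VA := fun u =>
    hVAO ▸ ⟨hmemO u, hB1 (j u)⟩
  let ρ : U → VA := fun u => ⟨HB (j u, 1), hmemVA u⟩
  have hρcont : Continuous ρ :=
    (hrcont.comp hjcont).subtype_mk _
  -- the three maps
  let f0 : C(U, X) := ⟨Subtype.val, continuous_subtype_val⟩
  let f1 : C(U, X) := ⟨fun u => HB (j u, 1), hrcont.comp hjcont⟩
  let f2 : C(U, X) := ⟨fun u => HA (ρ u, 1),
    HA.continuous.comp ((hρcont.comp continuous_id).prodMk continuous_const)⟩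
  let G1 : f0.Homotopy f1 :=
    { toFun := fun p => HB (j p.2, p.1)
      continuous_toFun := HB.continuous.comp
        ((hjcont.comp continuous_snd).prodMk continuous_fst)
      map_zero_left := fun u => hB0 (j u)
      map_one_left := fun u => rfl }
  let G2 : f1.Homotopy f2 :=
    { toFun := fun p => HA (ρ p.2, p.1)
      continuous_toFun := HA.continuous.comp
        ((hρcont.comp continuous_snd).prodMk continuous_fst)
      map_zero_left := fun u => hA0 (ρ u)
      map_one_left := fun u => rfl }
  let G := G1.trans G2
  refine ⟨U, hUopen, ?_, (G.toContinuousMap.comp ⟨Prod.swap, continuous_swap⟩), ?_, ?_, ?_⟩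
  · -- A ⊆ U
    intro a ha
    have haB : a ∈ B := hAB ha
    have haVB : a ∈ VB := hBVB haB
    refine ⟨⟨a, haVB⟩, ?_, rfl⟩
    show HB (⟨a, haVB⟩, 1) ∈ O
    rw [hBfix ⟨a, haVB⟩ haB 1]
    have : a ∈ VA := hAVA ha
    rw [hVAO] at this
    exact this.1
  · intro v
    show G (0, v) = (v : X)
    exact G.apply_zero v
  · intro v
    show G (1, v) ∈ A
    rw [G.apply_one v]
    exact hA1 (ρ v)
  · intro a haA t
    show G (t, a) = (a : X)
    have h1 : ∀ s : unitInterval, HB (j a, s) = (a : X) :=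
      fun s => hBfix (j a) (hAB haA) s
    have hρa : (ρ a : X) = (a : X) := h1 1
    have h2 : ∀ s : unitInterval, HA (ρ a, s) = (a : X) := fun s => by
      rw [hAfix (ρ a) (hρa ▸ haA) s]; exact hρa
    rw [ContinuousMap.Homotopy.trans_apply]
    split_ifs
    · exact h1 _
    · exact h2 _
end

section
/- Let X be a compact metric space, x ∈ X, and U an open neighborhood of x. Suppose there is a homotopy h : X × [0,1] → X with h(·,0) = id and h(x,t) ∈ U for all t, and an open set W with h(x,1) ∈ W ⊆ U together with a nullhomotopy g : W × [0,1] → U contracting W to a point inside U. Then there exists an open V with x ∈ V ⊆ U such that the inclusion V ↪ U is nullhomotopic. -/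
open unitInterval

/-- Concatenation argument for weak local contractibility: given a homotopy `h` from the
identity whose track at `x` stays in `U`, and an open `W ⊆ U` containing `h(x,1)` that is
nullhomotopic inside `U` via `g`, there is an open `V` with `x ∈ V ⊆ U` whose inclusion into
`U` is nullhomotopic. -/
theorem exists_nullhomotopic_nbhd {X : Type*} [MetricSpace X] [CompactSpace X]
    (x : X) (U : Set X) (hU : IsOpen U) (hx : x ∈ U)
    (h : C(X × unitInterval, X)) (h0 : ∀ y : X, h (y, 0) = y)
    (htrack : ∀ t : unitInterval, h (x, t) ∈ U)
    (W : Set X) (hW : IsOpen W) (hx1W : h (x, 1) ∈ W) (hWU : W ⊆ U)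
    (g : C(W × unitInterval, X))
    (hg0 : ∀ w : W, g (w, 0) = (w : X))
    (hgU : ∀ (w : W) (t : unitInterval), g (w, t) ∈ U)
    (hg1 : ∃ p ∈ U, ∀ w : W, g (w, 1) = p) :
    ∃ V : Set X, IsOpen V ∧ x ∈ V ∧ V ⊆ U ∧
      ∀ hVU : V ⊆ U, ContinuousMap.Nullhomotopic
        (⟨Set.inclusion hVU, continuous_inclusion hVU⟩ : C(V, U)) := by
  obtain ⟨p, hpU, hgp⟩ := hg1
  -- Tube lemma: open u ∋ x with u × I ⊆ h ⁻¹' U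
  obtain ⟨u, v, hu, hv, hxu, hIv, huv⟩ :=
    generalized_tube_lemma isCompact_singleton (isCompact_univ (X := unitInterval))
      (hU.preimage h.continuous)
      (by rintro ⟨a, t⟩ ⟨rfl, -⟩; exact htrack t)
  -- The map y ↦ h (y, 1) is continuous
  have hc1 : Continuous fun y : X => h (y, 1) :=
    h.continuous.comp (continuous_id.prodMk continuous_const)
  set V : Set X := u ∩ (fun y : X => h (y, 1)) ⁻¹' W with hVdef
  have hVopen : IsOpen V := hu.inter (hW.preimage hc1)
  have hxV : x ∈ V := ⟨hxu rfl, hx1W⟩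
  have htube : ∀ y ∈ V, ∀ t : unitInterval, h (y, t) ∈ U := by
    intro y hy t
    exact huv ⟨hy.1, hIv (Set.mem_univ t)⟩
  have hVU : V ⊆ U := fun y hy => by
    have := htube y hy 0
    rwa [h0 y] at this
  refine ⟨V, hVopen, hxV, hVU, fun hVU' => ?_⟩
  refine ⟨⟨p, hpU⟩, ?_⟩
  -- intermediate map: y ↦ h (y, 1) ∈ U
  set f₂ : C(V, U) := ⟨fun y => ⟨h ((y : X), 1), hWU y.2.2⟩,
    Continuous.subtype_mk (hc1.comp continuous_subtype_val) _⟩ with hf₂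
  have H1 : ContinuousMap.Homotopy
      (⟨Set.inclusion hVU', continuous_inclusion hVU'⟩ : C(V, U)) f₂ :=
    { toFun := fun q => ⟨h ((q.2 : X), q.1), htube _ q.2.2 q.1⟩
      continuous_toFun := by
        apply Continuous.subtype_mk
        exact h.continuous.comp
          ((continuous_subtype_val.comp continuous_snd).prodMk continuous_fst)
      map_zero_left := fun y => by
        simp only [Subtype.ext_iff]
        exact h0 (y : X)
      map_one_left := fun y => rfl }
  have H2 : ContinuousMap.Homotopy f₂ (ContinuousMap.const V (⟨p, hpU⟩ : U)) :=
    { toFun := fun q => ⟨g (⟨h ((q.2 : X), 1), q.2.2.2⟩, q.1), hgU _ _⟩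
      continuous_toFun := by
        apply Continuous.subtype_mk
        apply g.continuous.comp
        apply Continuous.prodMk
        · apply Continuous.subtype_mk
          exact hc1.comp (continuous_subtype_val.comp continuous_snd)
        · exact continuous_fst
      map_zero_left := fun y => by
        simp only [Subtype.ext_iff]
        exact hg0 _
      map_one_left := fun y => by
        simp only [Subtype.ext_iff, ContinuousMap.const_apply]
        exact hgp _ }
  exact ⟨H1.trans H2⟩
end
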